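/- arXiv:1601.06118 — 4 statements merged into one kernel-verified Lean document; each statement's English description precedes it below -/
import Mathlib

section
/- Let (f,A) be an analytic cocycle over a compact, connected measure space (X,μ) (X a compact connected real analytic manifold, μ a Borel probability measure whose pushforward under every analytic chart has a continuous density with respect to Lebesgue measure, f : X → X analytic and μ-preserving, A : X → ℂ^{d×d} real analytic). Suppose that for some n ≥ 1, m > 0 and r one has rank A_n(x) ≤ r for all x ∈ X and rank A_{n+m}(x) < r for all x ∈ X. Then rank A_{n+1}(x) < r for all x ∈ X. -/
open MeasureTheory Filter Topology

/-- Iterates of the linear cocycle `(f, A)`: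
`A_n(x) = A(f^[n-1] x) ⋯ A(f x) A(x)`. -/
noncomputable def cocycleIter {X : Type*} {d : ℕ} (f : X → X)
    (A : X → Matrix (Fin d) (Fin d) ℂ) : ℕ → X → Matrix (Fin d) (Fin d) ℂ
  | 0, _ => 1
  | n + 1, x => cocycleIter f A n (f x) * A x

/-- The `k`-th largest singular value of a matrix, `1 ≤ k ≤ d`, via the
Courant–Fischer max–min characterization. -/
noncomputable def singVal {d : ℕ} (k : ℕ) (M : Matrix (Fin d) (Fin d) ℂ) : ℝ :=
  sSup {t : ℝ | ∃ V : Submodule ℂ (EuclideanSpace ℂ (Fin d)),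
    Module.finrank ℂ V = k ∧ ∀ v ∈ V, t * ‖v‖ ≤ ‖(Matrix.toEuclideanLin M) v‖}

/-- The integral `∫ ln(g) dμ`, valued in `[-∞,∞]` (here `ln 0 = -∞`); by convention it is
`-∞` whenever the negative part of `ln g` is not `μ`-integrable. -/
noncomputable def elogIntegral {X : Type*} [MeasurableSpace X] (μ : Measure X) (g : X → ℝ) :
    EReal :=
  if μ {x | g x = 0} = 0 ∧ (∫⁻ x, ENNReal.ofReal (-Real.log (g x)) ∂μ) ≠ ⊤ then
    (∫⁻ x, ENNReal.ofReal (Real.log (g x)) ∂μ).toEReal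
      - (∫⁻ x, ENNReal.ofReal (-Real.log (g x)) ∂μ).toEReal
  else ⊥

/-- `L₁(f, A) = -∞`: the top Lyapunov exponent of the cocycle `(f,A)`, i.e.
`lim_n (1/n) ∫ ln ‖A_n(x)‖ dμ(x)` (with `‖·‖ = σ₁` the operator norm), is `-∞`. -/
def TopLyapunovEqBot {X : Type*} [MeasurableSpace X] (μ : Measure X) {d : ℕ}
    (f : X → X) (A : X → Matrix (Fin d) (Fin d) ℂ) : Prop :=
  Filter.Tendsto (fun n : ℕ => (((n : ℝ)⁻¹ : ℝ) : EReal)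
      * elogIntegral μ (fun x => singVal 1 (cocycleIter f A n x)))
    Filter.atTop (nhds ⊥)

/-- A map from the real analytic manifold `X` into a normed space is real analytic:
in every chart it is an analytic map. -/
def AnalyticOnMfd {ℓ : ℕ} {X : Type*} [TopologicalSpace X]
    [ChartedSpace (EuclideanSpace ℝ (Fin ℓ)) X]
    {F : Type*} [NormedAddCommGroup F] [NormedSpace ℝ F] (g : X → F) : Prop :=
  ∀ x : X, AnalyticAt ℝ (g ∘ (chartAt (EuclideanSpace ℝ (Fin ℓ)) x).symm)
    ((chartAt (EuclideanSpace ℝ (Fin ℓ)) x) x)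

/-- A self map of the real analytic manifold `X` is real analytic: it is continuous and,
read in the charts, analytic. -/
def AnalyticSelfMapMfd {ℓ : ℕ} {X : Type*} [TopologicalSpace X]
    [ChartedSpace (EuclideanSpace ℝ (Fin ℓ)) X] (f : X → X) : Prop :=
  Continuous f ∧ ∀ x : X, AnalyticAt ℝ
    ((chartAt (EuclideanSpace ℝ (Fin ℓ)) (f x)) ∘ f ∘ (chartAt (EuclideanSpace ℝ (Fin ℓ)) x).symm)
    ((chartAt (EuclideanSpace ℝ (Fin ℓ)) x) x)

/-- Assumption (A2): under every (analytic) chart, the push-forward of `μ` has a continuous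
density with respect to the Lebesgue measure. -/
def HasContinuousChartDensity {ℓ : ℕ} {X : Type*} [TopologicalSpace X]
    [ChartedSpace (EuclideanSpace ℝ (Fin ℓ)) X] [MeasurableSpace X] (μ : Measure X) : Prop :=
  ∀ x : X, ∃ ρ : EuclideanSpace ℝ (Fin ℓ) → ℝ,
    ContinuousOn ρ (chartAt (EuclideanSpace ℝ (Fin ℓ)) x).target ∧
    (μ.restrict (chartAt (EuclideanSpace ℝ (Fin ℓ)) x).source).map
        (chartAt (EuclideanSpace ℝ (Fin ℓ)) x)
      = (volume.restrict (chartAt (EuclideanSpace ℝ (Fin ℓ)) x).target).withDensity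
          (fun y => ENNReal.ofReal (ρ y))

/-!
Suppose `rank A_{n+1}(x₀) ≥ r` and choose `P`, `W` with `P A_{n+1}(x₀) W = 1`. Then
`g = det (P A_{n+1} W)` is a nonzero analytic function on the connected manifold `X`, so
`{g ≠ 0}` is open and dense, and therefore has positive measure, since `μ` has continuous
densities in charts. As `f` preserves `μ`, no `g ∘ f^k` vanishes identically, so each
`{g ∘ f^k ≠ 0}` is open and dense as well, and some `x` has `rank A_{n+1}(f^k x) ≥ r` for all
`k < m`. Because `rank A_n ≤ r`, such a step `A_{n+1}(y) = A_n(f y) A(y)` does not shrink the range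
of `A_n(f y)`, so `rank A_{n+1+k}(y) = rank A_{n+k}(f y)` for all `k`; chaining these equalities
gives `rank A_{n+m}(x) ≥ r`, a contradiction.
-/

namespace Matrix

variable {K : Type*} [Field K] {l m n o : Type*} [Fintype m] [Fintype n] [Fintype o]

theorem exists_mul_mul_eq_one_of_le_rank [DecidableEq m] [DecidableEq n] {r : ℕ}
    (M : Matrix m n K) (hr : r ≤ M.rank) :
    ∃ (P : Matrix (Fin r) m K) (W : Matrix n (Fin r) K), P * M * W = 1 := by
  obtain ⟨w, hw⟩ := exists_linearIndependent_of_le_finrank hr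
  obtain ⟨ψ, hψ⟩ := M.mulVecLin.rangeRestrict.exists_rightInverse_of_surjective
    (LinearMap.range_rangeRestrict _)
  set W' := ψ ∘ₗ Fintype.linearCombination K w
  have hinj : Function.Injective (M.mulVecLin ∘ₗ W') := fun a b hab => by
    have hrestrict : M.mulVecLin.rangeRestrict (W' a) = M.mulVecLin.rangeRestrict (W' b) :=
      Subtype.ext hab
    simp only [W', LinearMap.comp_apply, ← LinearMap.comp_apply (M.mulVecLin.rangeRestrict), hψ,
      LinearMap.id_apply] at hrestrict
    exact hw.fintypeLinearCombination_injective hrestrict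
  obtain ⟨P', hP'⟩ := (M.mulVecLin ∘ₗ W').exists_leftInverse_of_injective
    (LinearMap.ker_eq_bot.2 hinj)
  refine ⟨LinearMap.toMatrix' P', LinearMap.toMatrix' W', toLin'.injective ?_⟩
  rw [toLin'_mul, toLin'_mul, toLin'_toMatrix', toLin'_toMatrix', toLin'_one,
    LinearMap.comp_assoc]
  exact hP'

theorem le_rank_of_det_mul_mul_ne_zero {r : ℕ} {M : Matrix m n K} {P : Matrix (Fin r) m K}
    {W : Matrix n (Fin r) K} (h : (P * M * W).det ≠ 0) : r ≤ M.rank :=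
  calc r = (P * M * W).rank := by
        rw [rank_of_isUnit _ ((isUnit_iff_isUnit_det _).2 (isUnit_iff_ne_zero.2 h)),
          Fintype.card_fin]
    _ ≤ (P * M).rank := rank_mul_le_left _ _
    _ ≤ M.rank := rank_mul_le_right _ _

theorem rank_mul_mul_eq_of_rank_mul_eq {B : Matrix l m K} {C : Matrix m n K} {D : Matrix n o K}
    (h : (C * D).rank = C.rank) : (B * (C * D)).rank = (B * C).rank := by
  have hrange : LinearMap.range (C * D).mulVecLin = LinearMap.range C.mulVecLin := by
    refine Submodule.eq_of_le_of_finrank_le ?_ h.ge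
    rw [mulVecLin_mul]
    exact LinearMap.range_comp_le_range _ _
  rw [rank, rank, mulVecLin_mul B, mulVecLin_mul B, LinearMap.range_comp, LinearMap.range_comp,
    hrange]

end Matrix

section Cocycle

variable {X : Type*} {d : ℕ} (f : X → X) (A : X → Matrix (Fin d) (Fin d) ℂ)

theorem cocycleIter_add (a b : ℕ) (x : X) :
    cocycleIter f A (a + b) x = cocycleIter f A a (f^[b] x) * cocycleIter f A b x := by
  induction b generalizing x with
  | zero => simp [cocycleIter]
  | succ b ih =>
    rw [← add_assoc, cocycleIter, ih, cocycleIter, Function.iterate_succ_apply, mul_assoc]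

theorem rank_cocycleIter_succ_le (n : ℕ) (x : X) :
    (cocycleIter f A (n + 1) x).rank ≤ (cocycleIter f A n (f x)).rank :=
  Matrix.rank_mul_le_left _ _

variable {f A}

theorem rank_cocycleIter_succ_add_eq {n : ℕ} {y : X}
    (hy : (cocycleIter f A (n + 1) y).rank = (cocycleIter f A n (f y)).rank) (k : ℕ) :
    (cocycleIter f A (n + 1 + k) y).rank = (cocycleIter f A (n + k) (f y)).rank := by
  have hsplit : cocycleIter f A (n + 1 + k) y
      = cocycleIter f A k (f^[n + 1] y) * cocycleIter f A (n + 1) y := by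
    rw [add_comm, cocycleIter_add]
  have hsplit' : cocycleIter f A (n + k) (f y)
      = cocycleIter f A k (f^[n + 1] y) * cocycleIter f A n (f y) := by
    rw [add_comm, cocycleIter_add, Function.iterate_succ_apply]
  rw [hsplit, hsplit']
  exact Matrix.rank_mul_mul_eq_of_rank_mul_eq (C := cocycleIter f A n (f y)) (D := A y) hy

theorem le_rank_cocycleIter_add {n r : ℕ} (h_le : ∀ x, (cocycleIter f A n x).rank ≤ r) (j : ℕ)
    (x : X) (hx : ∀ k ≤ j, r ≤ (cocycleIter f A (n + 1) (f^[k] x)).rank) :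
    r ≤ (cocycleIter f A (n + 1 + j) x).rank := by
  induction j generalizing x with
  | zero => exact hx 0 le_rfl
  | succ j ih =>
    have hx₀ := hx 0 (Nat.zero_le _)
    have heq : (cocycleIter f A (n + 1) x).rank = (cocycleIter f A n (f x)).rank :=
      (rank_cocycleIter_succ_le f A n x).antisymm ((h_le _).trans hx₀)
    rw [rank_cocycleIter_succ_add_eq heq, ← add_assoc, add_right_comm]
    exact ih (f x) fun k hk => by
      simpa only [Function.iterate_succ_apply] using hx (k + 1) (by omega)

end Cocycle

namespace AnalyticOnMfd

variable {ℓ : ℕ} {X : Type*} [TopologicalSpace X] [ChartedSpace (EuclideanSpace ℝ (Fin ℓ)) X]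
  {F : Type*} [NormedAddCommGroup F] [NormedSpace ℝ F] {g : X → F}

protected theorem continuous (hg : AnalyticOnMfd (ℓ := ℓ) g) : Continuous g := by
  refine continuous_iff_continuousAt.2 fun x => ?_
  have hx := mem_chart_source (EuclideanSpace ℝ (Fin ℓ)) x
  refine ((hg x).continuousAt.comp ((chartAt _ x).continuousAt hx)).congr ?_
  filter_upwards [(chartAt _ x).eventually_left_inverse hx] with y hy
  simp [hy]

theorem comp_selfMap (hg : AnalyticOnMfd (ℓ := ℓ) g) {f : X → X}
    (hf : AnalyticSelfMapMfd (ℓ := ℓ) f) : AnalyticOnMfd (ℓ := ℓ) (g ∘ f) := by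
  intro x
  set e := chartAt (EuclideanSpace ℝ (Fin ℓ)) x
  set e' := chartAt (EuclideanSpace ℝ (Fin ℓ)) (f x)
  have hx : x ∈ e.source := mem_chart_source _ x
  have hcomp : AnalyticAt ℝ ((g ∘ e'.symm) ∘ (e' ∘ f ∘ e.symm)) (e x) :=
    (hg (f x)).comp_of_eq (hf.2 x) (congrArg (e' ∘ f) (e.left_inv hx))
  refine hcomp.congr ?_
  have hsource : ∀ᶠ y in 𝓝 (e x), f (e.symm y) ∈ e'.source :=
    ((hf.1.tendsto x).comp (e.tendsto_symm hx)).eventually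
      (e'.open_source.mem_nhds (mem_chart_source _ (f x)))
  filter_upwards [hsource] with y hy
  simp [e'.left_inv hy]

theorem comp_iterate (hg : AnalyticOnMfd (ℓ := ℓ) g) {f : X → X}
    (hf : AnalyticSelfMapMfd (ℓ := ℓ) f) (k : ℕ) : AnalyticOnMfd (ℓ := ℓ) (g ∘ f^[k]) := by
  induction k with
  | zero => exact hg
  | succ k ih => exact ih.comp_selfMap hf

theorem isClosed_setOf_eventuallyEq_zero [CompleteSpace F] (hg : AnalyticOnMfd (ℓ := ℓ) g) :
    IsClosed {x | g =ᶠ[𝓝 x] 0} := by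
  refine isClosed_of_closure_subset fun x hx => ?_
  set e := chartAt (EuclideanSpace ℝ (Fin ℓ)) x
  obtain ⟨ε, hε, hana⟩ := (hg x).exists_ball_analyticOnNhd
  have hO : IsOpen (e.source ∩ e ⁻¹' Metric.ball (e x) ε) :=
    e.isOpen_inter_preimage Metric.isOpen_ball
  have hxO : x ∈ e.source ∩ e ⁻¹' Metric.ball (e x) ε :=
    ⟨mem_chart_source _ x, Metric.mem_ball_self hε⟩
  obtain ⟨s, ⟨hs, hsB⟩, hs0⟩ := mem_closure_iff.1 hx _ hO hxO
  have hzero : Set.EqOn (g ∘ e.symm) 0 (Metric.ball (e x) ε) :=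
    hana.eqOn_zero_of_preconnected_of_eventuallyEq_zero (convex_ball _ _).isPreconnected hsB
      ((e.tendsto_symm hs).eventually hs0)
  filter_upwards [hO.mem_nhds hxO] with y hy
  simpa [e.left_inv hy.1] using hzero hy.2

theorem eq_zero_of_eventuallyEq_zero [PreconnectedSpace X] [CompleteSpace F]
    (hg : AnalyticOnMfd (ℓ := ℓ) g) {x₀ : X} (hx₀ : g =ᶠ[𝓝 x₀] 0) : g = 0 := by
  have hclopen : IsClopen {x | g =ᶠ[𝓝 x] 0} :=
    ⟨hg.isClosed_setOf_eventuallyEq_zero, isOpen_setOfPred_eventually_nhds⟩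
  funext x
  exact (Set.eq_univ_iff_forall.1 (hclopen.eq_univ ⟨x₀, hx₀⟩) x).self_of_nhds

theorem dense_setOf_ne_zero [PreconnectedSpace X] [CompleteSpace F]
    (hg : AnalyticOnMfd (ℓ := ℓ) g) (hne : g ≠ 0) :
    Dense {x | g x ≠ 0} := by
  show Dense {x | g x = 0}ᶜ
  rw [← interior_eq_empty_iff_dense_compl, Set.eq_empty_iff_forall_notMem]
  exact fun y hy => hne (hg.eq_zero_of_eventuallyEq_zero (mem_interior_iff_mem_nhds.1 hy))

end AnalyticOnMfd

section AnalyticAlgebra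

variable {ℓ : ℕ} {X : Type*} [TopologicalSpace X] [ChartedSpace (EuclideanSpace ℝ (Fin ℓ)) X]
  {𝔸 : Type*} [NormedCommRing 𝔸] [NormedAlgebra ℝ 𝔸]

theorem analyticOnMfd_const (c : 𝔸) : AnalyticOnMfd (ℓ := ℓ) (fun _ : X => c) :=
  fun _ => analyticAt_const

theorem analyticOnMfd_sum {ι : Type*} (s : Finset ι) {g : ι → X → 𝔸}
    (h : ∀ i ∈ s, AnalyticOnMfd (ℓ := ℓ) (g i)) :
    AnalyticOnMfd (ℓ := ℓ) (fun x => ∑ i ∈ s, g i x) :=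
  fun x => Finset.analyticAt_fun_sum s fun i hi => h i hi x

theorem analyticOnMfd_prod {ι : Type*} (s : Finset ι) {g : ι → X → 𝔸}
    (h : ∀ i ∈ s, AnalyticOnMfd (ℓ := ℓ) (g i)) :
    AnalyticOnMfd (ℓ := ℓ) (fun x => ∏ i ∈ s, g i x) :=
  fun x => Finset.analyticAt_fun_prod s fun i hi => h i hi x

theorem AnalyticOnMfd.mul {g h : X → 𝔸} (hg : AnalyticOnMfd (ℓ := ℓ) g)
    (hh : AnalyticOnMfd (ℓ := ℓ) h) : AnalyticOnMfd (ℓ := ℓ) (fun x => g x * h x) :=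
  fun x => (hg x).mul (hh x)

variable {l m n : Type*}

theorem analyticOnMfd_matrix_mul [Fintype m] {M : X → Matrix l m 𝔸} {N : X → Matrix m n 𝔸}
    (hM : ∀ i j, AnalyticOnMfd (ℓ := ℓ) (fun x => M x i j))
    (hN : ∀ i j, AnalyticOnMfd (ℓ := ℓ) (fun x => N x i j)) (i : l) (k : n) :
    AnalyticOnMfd (ℓ := ℓ) (fun x => (M x * N x) i k) := by
  simp only [Matrix.mul_apply]
  exact analyticOnMfd_sum _ fun j _ => (hM i j).mul (hN j k)

theorem analyticOnMfd_det [Fintype n] [DecidableEq n] {M : X → Matrix n n 𝔸}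
    (hM : ∀ i j, AnalyticOnMfd (ℓ := ℓ) (fun x => M x i j)) :
    AnalyticOnMfd (ℓ := ℓ) (fun x => (M x).det) := by
  simp only [Matrix.det_apply']
  exact analyticOnMfd_sum _ fun σ _ =>
    (analyticOnMfd_const _).mul (analyticOnMfd_prod _ fun i _ => hM (σ i) i)

theorem analyticOnMfd_cocycleIter {d : ℕ} {f : X → X} {A : X → Matrix (Fin d) (Fin d) ℂ}
    (hf : AnalyticSelfMapMfd (ℓ := ℓ) f)
    (hA : ∀ i j, AnalyticOnMfd (ℓ := ℓ) (fun x => A x i j)) (k : ℕ) (i j : Fin d) :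
    AnalyticOnMfd (ℓ := ℓ) (fun x => cocycleIter f A k x i j) := by
  induction k generalizing i j with
  | zero => exact analyticOnMfd_const _
  | succ k ih => exact analyticOnMfd_matrix_mul (fun i j => (ih i j).comp_selfMap hf) hA i j

end AnalyticAlgebra

theorem nonpos_of_setLIntegral_ofReal_eq_zero {E : Type*} [TopologicalSpace E] [MeasurableSpace E]
    [OpensMeasurableSpace E] (ν : Measure E) [ν.IsOpenPosMeasure] {ρ : E → ℝ} {T V : Set E}
    (hT : IsOpen T) (hρ : ContinuousOn ρ T) (hV : IsOpen V) (hVT : V ⊆ T) (hTV : T ⊆ closure V)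
    (h0 : ∫⁻ y in V, ENNReal.ofReal (ρ y) ∂ν = 0) : ∀ y ∈ T, ρ y ≤ 0 := by
  have hcont : ContinuousOn (fun y => ENNReal.ofReal (ρ y)) V :=
    ENNReal.continuous_ofReal.comp_continuousOn (hρ.mono hVT)
  have hae := (lintegral_eq_zero_iff' (hcont.aemeasurable hV.measurableSet)).1 h0
  have hV0 : ∀ y ∈ V, ρ y ≤ 0 := fun y hy =>
    ENNReal.ofReal_eq_zero.1 (Measure.eqOn_open_of_ae_eq hae hV hcont continuousOn_const hy)
  exact fun y hy => ContinuousWithinAt.closure_le (hTV hy)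
    (hρ.continuousAt (hT.mem_nhds hy)).continuousWithinAt continuousWithinAt_const hV0

namespace HasContinuousChartDensity

variable {ℓ : ℕ} {X : Type*} [TopologicalSpace X] [ChartedSpace (EuclideanSpace ℝ (Fin ℓ)) X]
  [MeasurableSpace X] [BorelSpace X] {μ : Measure X}

theorem measure_chart_source_eq_zero (hμ : HasContinuousChartDensity (ℓ := ℓ) μ) {U : Set X}
    (hUo : IsOpen U) (hUd : Dense U) (hU0 : μ U = 0) (c : X) :
    μ (chartAt (EuclideanSpace ℝ (Fin ℓ)) c).source = 0 := by
  set e := chartAt (EuclideanSpace ℝ (Fin ℓ)) c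
  obtain ⟨ρ, hρc, hρ⟩ := hμ c
  have hmap : ∀ s, MeasurableSet s →
      (μ.restrict e.source).map e s = μ (e.source ∩ e ⁻¹' s) := fun s hs => by
    rw [Measure.map_apply_of_aemeasurable
      (e.continuousOn.aemeasurable e.open_source.measurableSet) hs,
      Measure.restrict_apply' e.open_source.measurableSet, Set.inter_comm]
  set V := e.target ∩ e.symm ⁻¹' U
  have hVo : IsOpen V := e.isOpen_inter_preimage_symm hUo
  have hV0 : ∫⁻ y in V, ENNReal.ofReal (ρ y) = 0 := by
    have hνV := hmap V hVo.measurableSet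
    rw [hρ, withDensity_apply _ hVo.measurableSet, Measure.restrict_restrict hVo.measurableSet,
      Set.inter_eq_self_of_subset_left Set.inter_subset_left] at hνV
    rw [hνV]
    exact measure_mono_null (fun x hx => by simpa [e.left_inv hx.1] using hx.2.2) hU0
  have hTV : e.target ⊆ closure V := by
    have hclosure := e.symm.preimage_closure U
    rw [hUd.closure_eq, Set.preimage_univ, Set.inter_univ] at hclosure
    exact fun y hy => e.open_target.inter_closure (hclosure ▸ hy : y ∈ e.symm.source ∩ _)
  have hρ0 := nonpos_of_setLIntegral_ofReal_eq_zero volume e.open_target hρc hVo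
    Set.inter_subset_left hTV hV0
  rw [← (Set.inter_eq_left (t := e ⁻¹' e.target)).2 e.mapsTo,
    ← hmap _ e.open_target.measurableSet, hρ, withDensity_apply _ e.open_target.measurableSet]
  exact (setLIntegral_congr_fun e.open_target.measurableSet
    fun y hy => ENNReal.ofReal_eq_zero.2 (hρ0 y hy)).trans lintegral_zero

theorem measure_ne_zero_of_dense [CompactSpace X] [NeZero μ]
    (hμ : HasContinuousChartDensity (ℓ := ℓ) μ) {U : Set X} (hUo : IsOpen U) (hUd : Dense U) :
    μ U ≠ 0 := fun hU0 =>
  NeZero.ne μ <| Measure.measure_univ_eq_zero.1 <| isCompact_univ.measure_zero_of_nhdsWithin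
    fun c _ => ⟨_, mem_nhdsWithin_of_mem_nhds ((chartAt _ c).open_source.mem_nhds
      (mem_chart_source _ c)), hμ.measure_chart_source_eq_zero hUo hUd hU0 c⟩

end HasContinuousChartDensity

theorem stmt_9_general {ℓ d : ℕ} {X : Type*} [TopologicalSpace X] [CompactSpace X]
    [ConnectedSpace X] [ChartedSpace (EuclideanSpace ℝ (Fin ℓ)) X]
    [MeasurableSpace X] [BorelSpace X]
    (μ : Measure X) [IsProbabilityMeasure μ]
    (hμ : HasContinuousChartDensity (ℓ := ℓ) μ)
    (f : X → X) (hf : AnalyticSelfMapMfd (ℓ := ℓ) f) (hf_mp : MeasurePreserving f μ μ)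
    (A : X → Matrix (Fin d) (Fin d) ℂ)
    (hA : ∀ i j : Fin d, AnalyticOnMfd (ℓ := ℓ) (fun x => A x i j))
    (n m r : ℕ)
    (h_le : ∀ x : X, (cocycleIter f A n x).rank ≤ r)
    (h_lt : ∀ x : X, (cocycleIter f A (n + m) x).rank < r) :
    ∀ x : X, (cocycleIter f A (n + 1) x).rank < r := by
  obtain _ | j := m
  · exact fun x => (rank_cocycleIter_succ_le f A n x).trans_lt (h_lt (f x))
  by_contra! ⟨x₀, hx₀⟩
  obtain ⟨P, W, hPW⟩ := Matrix.exists_mul_mul_eq_one_of_le_rank _ hx₀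
  set g : X → ℂ := fun x => (P * cocycleIter f A (n + 1) x * W).det
  have hg : AnalyticOnMfd (ℓ := ℓ) g := analyticOnMfd_det <| analyticOnMfd_matrix_mul
    (analyticOnMfd_matrix_mul (fun _ _ => analyticOnMfd_const _)
      (analyticOnMfd_cocycleIter hf hA _))
    fun _ _ => analyticOnMfd_const _
  have hg₀ : g ≠ 0 := fun h => by simpa [g, hPW] using congrFun h x₀
  have hUo : IsOpen {x | g x ≠ 0} := isOpen_ne_fun hg.continuous continuous_const
  have hU : μ {x | g x ≠ 0} ≠ 0 := hμ.measure_ne_zero_of_dense hUo (hg.dense_setOf_ne_zero hg₀)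
  have hpreimage : ∀ k, IsOpen (f^[k] ⁻¹' {x | g x ≠ 0}) ∧ Dense (f^[k] ⁻¹' {x | g x ≠ 0}) := by
    refine fun k => ⟨hUo.preimage (hf.1.iterate k),
      (hg.comp_iterate hf k).dense_setOf_ne_zero fun hk => hU ?_⟩
    have hempty : f^[k] ⁻¹' {x | g x ≠ 0} = ∅ :=
      Set.eq_empty_of_forall_notMem fun x hx => hx (congrFun hk x)
    rw [← (hf_mp.iterate k).measure_preimage hUo.measurableSet.nullMeasurableSet, hempty,
      measure_empty]
  obtain ⟨x, hx⟩ := ((Set.finite_Iic j).image _).dense_sInter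
    (by rintro _ ⟨k, -, rfl⟩; exact (hpreimage k).1) (by rintro _ ⟨k, -, rfl⟩; exact (hpreimage k).2)
    |>.nonempty
  simp only [Set.sInter_image, Set.mem_iInter] at hx
  have hrank := le_rank_cocycleIter_add h_le j x fun k hk =>
    Matrix.le_rank_of_det_mul_mul_ne_zero (hx k hk)
  exact (h_lt x).not_ge (by rwa [add_right_comm] at hrank)

/-- For an analytic cocycle `(f, A)` over a compact connected measure space
`(X, μ)`: if for some `n ≥ 1`, `m > 0` and `r` one has `rank A_n(x) ≤ r` for all `x` and
`rank A_{n+m}(x) < r` for all `x`, then already `rank A_{n+1}(x) < r` for all `x`. -/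
theorem stmt_9 {ℓ d : ℕ} {X : Type*} [TopologicalSpace X] [T2Space X] [CompactSpace X]
    [ConnectedSpace X] [ChartedSpace (EuclideanSpace ℝ (Fin ℓ)) X]
    [IsManifold (modelWithCornersSelf ℝ (EuclideanSpace ℝ (Fin ℓ))) (⊤ : WithTop ℕ∞) X]
    [MeasurableSpace X] [BorelSpace X]
    (μ : Measure X) [IsProbabilityMeasure μ]
    (hμ : HasContinuousChartDensity (ℓ := ℓ) μ)
    (f : X → X) (hf : AnalyticSelfMapMfd (ℓ := ℓ) f) (hf_mp : MeasurePreserving f μ μ)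
    (A : X → Matrix (Fin d) (Fin d) ℂ)
    (hA : ∀ i j : Fin d, AnalyticOnMfd (ℓ := ℓ) (fun x => A x i j))
    (n m r : ℕ) (hn : 1 ≤ n) (hm : 0 < m)
    (h_le : ∀ x : X, (cocycleIter f A n x).rank ≤ r)
    (h_lt : ∀ x : X, (cocycleIter f A (n + m) x).rank < r) :
    ∀ x : X, (cocycleIter f A (n + 1) x).rank < r :=
  stmt_9_general μ hμ f hf hf_mp A hA n m r h_le h_lt
end

section
/- Let φ : ℝ → ℂ^d be real analytic, 1-periodic and not identically zero. Then there exist a real analytic 1-periodic map ψ : ℝ → ℂ^d with ‖ψ(x)‖ = 1 for all x and a real analytic 1-periodic function c : ℝ → ℂ such that φ(x) = c(x)ψ(x) for all x; in particular, for every x the vector φ(x) is a complex scalar multiple of the unit vector ψ(x). -/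
/-!
The zeros of `φ` in one period are finitely many, say `z` with vanishing order `k_z`. With
`e(x) = exp(2πix)`, the function `p(x) = ∏_z (e(x) - e(z)) ^ k_z` is analytic, 1-periodic, and
vanishes at every point to exactly the order of `φ`, since `e(x) - e(z)` has simple zeros at
`z + ℤ` and no others. Hence `φ / p` extends across its removable singularities to an analytic,
1-periodic, nowhere vanishing map `ξ`, and `ψ = ξ / ‖ξ‖`, `c = p ‖ξ‖` do the job; `‖ξ‖` is
analytic as the square root of the positive analytic function `‖ξ‖²`.
-/

open Filter Topology

lemma limUnder_nhdsNE_eq_of_eventuallyEq {X E : Type*} [TopologicalSpace X] [TopologicalSpace E]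
    [T2Space E] [Nonempty E] {f g : X → E} {x : X} [(𝓝[≠] x).NeBot] (hg : ContinuousAt g x)
    (hfg : f =ᶠ[𝓝[≠] x] g) :
    limUnder (𝓝[≠] x) f = g x :=
  ((hg.tendsto.mono_left nhdsWithin_le_nhds).congr' hfg.symm).limUnder_eq

lemma eventuallyEq_limUnder_nhdsNE {𝕜 E : Type*} [NontriviallyNormedField 𝕜]
    [NormedAddCommGroup E] [NormedSpace 𝕜 E] [CompleteSpace E] {f g : 𝕜 → E} {x : 𝕜}
    (hg : AnalyticAt 𝕜 g x) (hfg : f =ᶠ[𝓝[≠] x] g) :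
    (fun y => limUnder (𝓝[≠] y) f) =ᶠ[𝓝 x] g := by
  have hfg' : ∀ᶠ y in 𝓝 x, ∀ᶠ z in 𝓝 y, z ≠ x → f z = g z :=
    (eventually_nhdsWithin_iff.mp hfg).eventually_nhds
  filter_upwards [hfg', hg.eventually_analyticAt] with y hy hgy
  rcases eq_or_ne y x with rfl | hyx
  · exact limUnder_nhdsNE_eq_of_eventuallyEq hg.continuousAt hfg
  · refine limUnder_nhdsNE_eq_of_eventuallyEq hgy.continuousAt ?_
    filter_upwards [nhdsWithin_le_nhds (hy.and (eventually_ne_nhds hyx))] with z hz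
    exact hz.1 hz.2

lemma Function.Periodic.limUnder_nhdsNE {G E : Type*} [AddGroup G] [TopologicalSpace G]
    [IsTopologicalAddGroup G] [TopologicalSpace E] [Nonempty E] {f : G → E} {c : G}
    (hf : Function.Periodic f c) :
    Function.Periodic (fun y => limUnder (𝓝[≠] y) f) c := by
  intro y
  have hmap : map (· + c) (𝓝[≠] y) = 𝓝[≠] (y + c) :=
    (Homeomorph.addRight c).map_punctured_nhds_eq y
  change lim (map f (𝓝[≠] (y + c))) = lim (map f (𝓝[≠] y))
  rw [← hmap, map_map, show f ∘ (· + c) = f from funext hf]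

section OrderOfProducts

variable {𝕜 𝕝 : Type*} [NontriviallyNormedField 𝕜] [NontriviallyNormedField 𝕝] [NormedAlgebra 𝕜 𝕝]
  {f g : 𝕜 → 𝕝} {x : 𝕜}

lemma AnalyticAt.analyticOrderAt_mul (hf : AnalyticAt 𝕜 f x) (hg : AnalyticAt 𝕜 g x) :
    analyticOrderAt (fun t => f t * g t) x = analyticOrderAt f x + analyticOrderAt g x := by
  rcases eq_or_ne (analyticOrderAt f x) ⊤ with hf' | hf'
  · rw [hf', top_add, analyticOrderAt_eq_top]
    filter_upwards [analyticOrderAt_eq_top.mp hf'] with t ht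
    rw [ht, zero_mul]
  rcases eq_or_ne (analyticOrderAt g x) ⊤ with hg' | hg'
  · rw [hg', add_top, analyticOrderAt_eq_top]
    filter_upwards [analyticOrderAt_eq_top.mp hg'] with t ht
    rw [ht, mul_zero]
  obtain ⟨u, hu, hu0, hfu⟩ := hf.analyticOrderAt_ne_top.mp hf'
  obtain ⟨v, hv, hv0, hgv⟩ := hg.analyticOrderAt_ne_top.mp hg'
  rw [← Nat.cast_analyticOrderNatAt hf', ← Nat.cast_analyticOrderNatAt hg', ← Nat.cast_add,
    (hf.fun_mul hg).analyticOrderAt_eq_natCast]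
  refine ⟨fun t => u t * v t, hu.mul hv, mul_ne_zero hu0 hv0, ?_⟩
  filter_upwards [hfu, hgv] with t hft hgt
  rw [hft, hgt, smul_mul_smul_comm, pow_add]

lemma AnalyticAt.analyticOrderAt_pow (hf : AnalyticAt 𝕜 f x) (n : ℕ) :
    analyticOrderAt (fun t => f t ^ n) x = n * analyticOrderAt f x := by
  induction n with
  | zero => simp [analyticOrderAt_eq_zero]
  | succ n ih =>
    simp only [pow_succ, (hf.fun_pow n).analyticOrderAt_mul hf, ih]
    push_cast
    ring

lemma analyticOrderAt_prod {ι : Type*} (s : Finset ι) {f : ι → 𝕜 → 𝕝}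
    (hf : ∀ i ∈ s, AnalyticAt 𝕜 (f i) x) :
    analyticOrderAt (fun t => ∏ i ∈ s, f i t) x = ∑ i ∈ s, analyticOrderAt (f i) x := by
  classical
  induction s using Finset.induction_on with
  | empty => simp [analyticOrderAt_eq_zero]
  | insert i s hi ih =>
    simp only [Finset.prod_insert hi, Finset.sum_insert hi]
    rw [(hf i (s.mem_insert_self i)).analyticOrderAt_mul
      (s.analyticAt_fun_prod fun j hj => hf j (Finset.mem_insert_of_mem hj)),
      ih fun j hj => hf j (Finset.mem_insert_of_mem hj)]

end OrderOfProducts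

section Division

variable {𝕜 𝕝 E : Type*} [NontriviallyNormedField 𝕜] [NontriviallyNormedField 𝕝]
  [NormedAlgebra 𝕜 𝕝] [NormedAddCommGroup E] [NormedSpace 𝕜 E] [NormedSpace 𝕝 E]
  [IsScalarTower 𝕜 𝕝 E]

lemma AnalyticAt.exists_eventuallyEq_smul_of_analyticOrderAt_eq {f : 𝕜 → E} {p : 𝕜 → 𝕝}
    {x : 𝕜} (hf : AnalyticAt 𝕜 f x) (hp : AnalyticAt 𝕜 p x)
    (hord : analyticOrderAt p x = analyticOrderAt f x) (hfin : analyticOrderAt f x ≠ ⊤) :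
    ∃ g : 𝕜 → E, AnalyticAt 𝕜 g x ∧ g x ≠ 0 ∧ (f =ᶠ[𝓝 x] fun t => p t • g t) ∧
      ∀ᶠ t in 𝓝[≠] x, p t ≠ 0 := by
  obtain ⟨ρ, hρ, hρ0, hfρ⟩ := hf.analyticOrderAt_ne_top.mp hfin
  obtain ⟨u, hu, hu0, hpu⟩ := hp.analyticOrderAt_ne_top.mp (hord ▸ hfin)
  have hu_ne : ∀ᶠ t in 𝓝 x, u t ≠ 0 := hu.continuousAt.eventually_ne hu0
  rw [analyticOrderNatAt, hord, ← analyticOrderNatAt] at hpu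
  refine ⟨fun t => (u t)⁻¹ • ρ t, (hu.inv hu0).smul hρ, smul_ne_zero (inv_ne_zero hu0) hρ0, ?_, ?_⟩
  · filter_upwards [hfρ, hpu, hu_ne] with t hft hpt hut
    rw [hft, hpt, smul_assoc, smul_inv_smul₀ hut]
  · filter_upwards [eventually_nhdsWithin_of_eventually_nhds (hpu.and hu_ne),
      self_mem_nhdsWithin] with t ht htx
    rw [ht.1]
    exact smul_ne_zero (pow_ne_zero _ (sub_ne_zero.mpr htx)) ht.2

theorem Function.Periodic.exists_smul_eq_of_analyticOrderAt_eq [CompleteSpace E] {f : 𝕜 → E}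
    {p : 𝕜 → 𝕝} {c : 𝕜} (hf_per : Function.Periodic f c) (hp_per : Function.Periodic p c)
    (hf : ∀ x, AnalyticAt 𝕜 f x) (hp : ∀ x, AnalyticAt 𝕜 p x)
    (hord : ∀ x, analyticOrderAt p x = analyticOrderAt f x)
    (hfin : ∀ x, analyticOrderAt f x ≠ ⊤) :
    ∃ ξ : 𝕜 → E, Function.Periodic ξ c ∧ (∀ x, AnalyticAt 𝕜 ξ x) ∧ (∀ x, ξ x ≠ 0) ∧
      ∀ x, f x = p x • ξ x := by
  set ξ : 𝕜 → E := fun y => limUnder (𝓝[≠] y) fun t => (p t)⁻¹ • f t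
  have hξ : ∀ x, ∃ g : 𝕜 → E, AnalyticAt 𝕜 g x ∧ g x ≠ 0 ∧ f x = p x • g x ∧ ξ =ᶠ[𝓝 x] g := by
    intro x
    obtain ⟨g, hg, hg0, hfg, hp0⟩ :=
      (hf x).exists_eventuallyEq_smul_of_analyticOrderAt_eq (hp x) (hord x) (hfin x)
    refine ⟨g, hg, hg0, hfg.self_of_nhds, eventuallyEq_limUnder_nhdsNE hg ?_⟩
    filter_upwards [eventually_nhdsWithin_of_eventually_nhds hfg, hp0] with t hft hpt
    rw [hft, inv_smul_smul₀ hpt]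
  refine ⟨ξ, Function.Periodic.limUnder_nhdsNE fun t => by rw [hf_per t, hp_per t],
    fun x => ?_, fun x => ?_, fun x => ?_⟩
  · obtain ⟨g, hg, -, -, hξg⟩ := hξ x
    exact hg.congr hξg.symm
  · obtain ⟨g, -, hg0, -, hξg⟩ := hξ x
    rwa [hξg.self_of_nhds]
  · obtain ⟨g, -, -, hfg, hξg⟩ := hξ x
    rwa [hξg.self_of_nhds]

end Division

section PeriodicDenominator

open Real FourierTransform

lemma analyticAt_fourierChar (x : ℝ) : AnalyticAt ℝ (fun t => (𝐞 t : ℂ)) x := by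
  simp only [fourierChar_apply]
  exact analyticAt_cexp.restrictScalars.comp
    (((Complex.ofRealCLM.analyticAt _).comp (analyticAt_const.mul analyticAt_id)).mul
      analyticAt_const)

lemma periodic_fourierChar : Function.Periodic (fun t => (𝐞 t : ℂ)) 1 := fun x => by
  simp [AddChar.map_add_eq_mul, fourierChar_apply', Circle.exp_two_pi]

lemma fourierChar_eq_fourierChar_iff {x y : ℝ} :
    (𝐞 x : ℂ) = 𝐞 y ↔ Int.fract x = Int.fract y := by
  rw [eq_comm (a := Int.fract x), Int.fract_eq_fract, Circle.coe_inj, fourierChar_apply',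
    fourierChar_apply', Circle.exp_inj, AddCommGroup.modEq_iff_zsmul']
  refine exists_congr fun m => ?_
  rw [zsmul_eq_mul, ← mul_sub, mul_comm (m : ℝ), mul_right_inj' two_pi_pos.ne']

lemma analyticOrderAt_fourierChar_sub (x y : ℝ) :
    analyticOrderAt (fun t => (𝐞 t : ℂ) - 𝐞 y) x =
      if Int.fract x = Int.fract y then 1 else 0 := by
  split_ifs with h
  · rw [← fourierChar_eq_fourierChar_iff] at h
    rw [← h]
    refine (analyticAt_fourierChar x).analyticOrderAt_sub_eq_one_of_deriv_ne_zero ?_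
    rw [deriv_fourierChar]
    simp [Real.pi_ne_zero, Complex.I_ne_zero]
  · rw [analyticOrderAt_eq_zero, sub_ne_zero, Ne, fourierChar_eq_fourierChar_iff]
    exact Or.inr h

lemma Function.Periodic.analyticOrderAt_add {𝕜 E : Type*} [NontriviallyNormedField 𝕜]
    [NormedAddCommGroup E] [NormedSpace 𝕜 E] {f : 𝕜 → E} {c : 𝕜} (hf : Function.Periodic f c)
    {x : 𝕜} (hfx : AnalyticAt 𝕜 f (x + c)) :
    analyticOrderAt f (x + c) = analyticOrderAt f x := by
  simpa [Function.comp_def, hf _] using (hfx.analyticOrderAt_comp (g := (· + c)) (by fun_prop)).symm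

lemma Function.Periodic.analyticOrderAt_fract {E : Type*} [NormedAddCommGroup E]
    [NormedSpace ℝ E] {f : ℝ → E} (hf : Function.Periodic f 1) (hfx : ∀ x, AnalyticAt ℝ f x)
    (x : ℝ) : analyticOrderAt f (Int.fract x) = analyticOrderAt f x := by
  have := (hf.int_mul ⌊x⌋).analyticOrderAt_add (hfx _) (x := Int.fract x)
  rw [mul_one, Int.fract_add_floor] at this
  exact this.symm

lemma finite_Icc_inter_preimage_zero {E : Type*} [NormedAddCommGroup E] [NormedSpace ℝ E]
    {f : ℝ → E} (hf : ∀ x, AnalyticAt ℝ f x) (hf0 : f ≠ 0) (a b : ℝ) :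
    (Set.Icc a b ∩ f ⁻¹' {0}).Finite := by
  obtain ⟨x, hx⟩ := Function.ne_iff.mp hf0
  have hcod := AnalyticOnNhd.preimage_zero_mem_codiscrete (fun y _ => hf y) hx
  refine ((isCompact_Icc (a := a) (b := b)).finite_sdiff_of_mem_codiscreteWithin
    (codiscreteWithin_mono (Set.subset_univ _) hcod)).subset ?_
  rintro y ⟨hy, hy0⟩
  exact ⟨hy, fun h => h hy0⟩

theorem exists_periodic_analyticOrderAt_eq {E : Type*} [NormedAddCommGroup E] [NormedSpace ℝ E]
    {f : ℝ → E} (hf_per : Function.Periodic f 1) (hf : ∀ x, AnalyticAt ℝ f x) (hf0 : f ≠ 0) :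
    ∃ p : ℝ → ℂ, Function.Periodic p 1 ∧ (∀ x, AnalyticAt ℝ p x) ∧
      ∀ x, analyticOrderAt p x = analyticOrderAt f x := by
  classical
  set Z := ((finite_Icc_inter_preimage_zero hf hf0 0 1).subset
    (Set.inter_subset_inter_left _ Set.Ico_subset_Icc_self)).toFinset
  have hZ : ∀ z, z ∈ Z ↔ Int.fract z = z ∧ f z = 0 := fun z => by
    simp [Z, Int.fract_eq_self]
  have hfactor : ∀ z x, AnalyticAt ℝ (fun t => ((𝐞 t : ℂ) - 𝐞 z) ^ analyticOrderNatAt f z) x :=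
    fun z x => ((analyticAt_fourierChar x).fun_sub analyticAt_const).fun_pow _
  refine ⟨fun t => ∏ z ∈ Z, ((𝐞 t : ℂ) - 𝐞 z) ^ analyticOrderNatAt f z,
    fun t => by simp only [periodic_fourierChar t], fun x => Z.analyticAt_fun_prod
      fun z _ => hfactor z x, fun x => ?_⟩
  have hterm : ∀ z ∈ Z, analyticOrderAt (fun t => ((𝐞 t : ℂ) - 𝐞 z) ^ analyticOrderNatAt f z) x =
      if Int.fract x = z then (analyticOrderNatAt f z : ℕ∞) else 0 := by
    intro z hz
    rw [((analyticAt_fourierChar x).fun_sub analyticAt_const).analyticOrderAt_pow,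
      analyticOrderAt_fourierChar_sub, ((hZ z).mp hz).1]
    split_ifs <;> simp
  rw [analyticOrderAt_prod Z fun z _ => hfactor z x, Finset.sum_congr rfl hterm,
    Finset.sum_ite_eq, ← hf_per.analyticOrderAt_fract hf x]
  split_ifs with hx
  · exact Nat.cast_analyticOrderNatAt
      ((AnalyticOnNhd.analyticOrderAt_eq_top_iff_eq_zero _ hf).not.mpr hf0)
  · rw [hZ, Int.fract_fract] at hx
    exact ((hf _).analyticOrderAt_eq_zero.mpr fun h => hx ⟨rfl, h⟩).symm

end PeriodicDenominator

section Normalization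

open scoped ContDiff

lemma AnalyticAt.norm_sq {E F : Type*} [NormedAddCommGroup E] [NormedSpace ℝ E]
    [NormedAddCommGroup F] [InnerProductSpace ℝ F] {f : E → F} {x : E} (hf : AnalyticAt ℝ f x) :
    AnalyticAt ℝ (fun t => ‖f t‖ ^ 2) x := by
  simp_rw [← real_inner_self_eq_norm_sq]
  exact ((innerSL ℝ).analyticAt_bilinear (f x, f x)).comp₂ hf hf

lemma AnalyticAt.sqrt {E : Type*} [NormedAddCommGroup E] [NormedSpace ℝ E] {f : E → ℝ} {x : E}
    (hf : AnalyticAt ℝ f x) (hx : f x ≠ 0) : AnalyticAt ℝ (fun t => √(f t)) x :=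
  (Real.contDiffAt_sqrt (n := ω) hx).analyticAt.comp hf

variable {ι F : Type*} [Fintype ι] [NormedAddCommGroup F] {v : ι → F}

lemma sum_norm_sq_pos (hv : v ≠ 0) : 0 < ∑ i, ‖v i‖ ^ 2 := by
  obtain ⟨j, hj⟩ := Function.ne_iff.mp hv
  exact Finset.sum_pos' (fun i _ => by positivity)
    ⟨j, Finset.mem_univ j, pow_pos (norm_pos_iff.mpr hj) 2⟩

lemma sum_norm_sq_inv_sqrt_smul [NormedSpace ℝ F] (hv : v ≠ 0) :
    ∑ i, ‖(√(∑ j, ‖v j‖ ^ 2))⁻¹ • v i‖ ^ 2 = 1 := by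
  simp_rw [norm_smul, mul_pow, ← Finset.mul_sum, Real.norm_eq_abs, sq_abs, inv_pow,
    Real.sq_sqrt (sum_norm_sq_pos hv).le]
  exact inv_mul_cancel₀ (sum_norm_sq_pos hv).ne'

end Normalization

/-- A real analytic, 1-periodic, not identically vanishing map
`φ : ℝ → ℂ^d` can be written as `φ(x) = c(x) ψ(x)` with `c` a real analytic 1-periodic
scalar function and `ψ` a real analytic 1-periodic map of unit vectors (Hermitian norm). -/
theorem stmt_10 {d : ℕ} (φ : ℝ → Fin d → ℂ)
    (hφ_per : Function.Periodic φ 1)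
    (hφ_an : ∀ (x : ℝ) (i : Fin d), AnalyticAt ℝ (fun t => φ t i) x)
    (hφ_ne : ∃ x : ℝ, φ x ≠ 0) :
    ∃ (ψ : ℝ → Fin d → ℂ) (c : ℝ → ℂ),
      Function.Periodic ψ 1 ∧
      (∀ (x : ℝ) (i : Fin d), AnalyticAt ℝ (fun t => ψ t i) x) ∧
      Function.Periodic c 1 ∧
      (∀ x : ℝ, AnalyticAt ℝ c x) ∧
      (∀ x : ℝ, ∑ i, ‖ψ x i‖ ^ 2 = 1) ∧
      (∀ (x : ℝ) (i : Fin d), φ x i = c x * ψ x i) := by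
  have hφ : ∀ x, AnalyticAt ℝ φ x := fun x => analyticAt_pi_iff.mpr (hφ_an x)
  have hφ0 : φ ≠ 0 := fun h => hφ_ne.elim fun x hx => hx (congrFun h x)
  obtain ⟨p, hp_per, hp, hord⟩ := exists_periodic_analyticOrderAt_eq hφ_per hφ hφ0
  obtain ⟨ξ, hξ_per, hξ, hξ0, hφξ⟩ := hφ_per.exists_smul_eq_of_analyticOrderAt_eq hp_per hφ hp
    hord fun x => (AnalyticOnNhd.analyticOrderAt_eq_top_iff_eq_zero x hφ).not.mpr hφ0
  set s : ℝ → ℝ := fun t => √(∑ i, ‖ξ t i‖ ^ 2)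
  have hs0 : ∀ x, s x ≠ 0 := fun x => (Real.sqrt_pos.mpr (sum_norm_sq_pos (hξ0 x))).ne'
  have hs : ∀ x, AnalyticAt ℝ s x := fun x =>
    (Finset.univ.analyticAt_fun_sum fun i _ => (analyticAt_pi_iff.mp (hξ x) i).norm_sq).sqrt
      (sum_norm_sq_pos (hξ0 x)).ne'
  refine ⟨fun t => (s t)⁻¹ • ξ t, fun t => p t * s t, fun t => by simp only [s, hξ_per t],
    fun x => analyticAt_pi_iff.mp (((hs x).inv (hs0 x)).smul (hξ x)),
    fun t => by simp only [s, hξ_per t, hp_per t],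
    fun x => (hp x).mul ((Complex.ofRealCLM.analyticAt _).comp (hs x)),
    fun x => sum_norm_sq_inv_sqrt_smul (hξ0 x), fun x i => ?_⟩
  simp only [hφξ x, Pi.smul_apply, smul_eq_mul, Complex.real_smul, Complex.ofReal_inv]
  rw [mul_assoc, mul_inv_cancel_left₀ (Complex.ofReal_ne_zero.mpr (hs0 x))]
end

section
/- Let A : ℝ → ℂ^{d×d} be real analytic and 1-periodic, and let P : ℝ → ℂ^{d×d} be real analytic and 1-periodic with each P(x) an orthogonal projection of rank k. If the dimension of the preimage subspace A(x)^{−1}(ran P(x)) = {v ∈ ℂ^d : A(x)v ∈ ran P(x)} is constant in x, then the map assigning to x the orthogonal projection onto A(x)^{−1}(ran P(x)) is real analytic and 1-periodic. In particular, if dim ker A(x) is constant, the orthogonal projection onto ker A(x) is real analytic. -/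
open MeasureTheory Filter Topology Matrix

/-- A real analytic, 1-periodic matrix valued map. -/
def AnalyticPeriodicMat {d e : ℕ} (A : ℝ → Matrix (Fin d) (Fin e) ℂ) : Prop :=
  Function.Periodic A 1 ∧ ∀ (x : ℝ) (i : Fin d) (j : Fin e), AnalyticAt ℝ (fun t => A t i j) x

/-- `P` is an orthogonal projection matrix (w.r.t. the Hermitian inner product). -/
def IsOrthProj {d : ℕ} (P : Matrix (Fin d) (Fin d) ℂ) : Prop :=
  P * P = P ∧ Pᴴ = P

/-- The range (column span) of a matrix, as a subspace of `ℂ^d`. -/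
noncomputable def matRange {d e : ℕ} (M : Matrix (Fin d) (Fin e) ℂ) : Submodule ℂ (Fin d → ℂ) :=
  LinearMap.range M.mulVecLin

/-!
For a family `B(x)` whose kernel has constant dimension `m`, put `M = Bᴴ B`: it is Hermitian with
`ker M = ker B`. For Hermitian `M` the kernels of all powers `M ^ j` agree with `ker M`, so `0` is a
root of multiplicity exactly `m` of the characteristic polynomial: `charpoly M = X ^ m * p` with
`p(0) ≠ 0`, and Cayley–Hamilton gives `M p(M) = 0`. Writing `p(M) / p(0) = 1 + M S` with `S` a
polynomial in `M`, this matrix is the orthogonal projection onto `ker M`. Its entries are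
polynomials in the entries of `B` divided by `coeff m (charpoly M) = p(0)`, which never vanishes,
so the projection is analytic and periodic. The preimage `A⁻¹(ran P)` is the kernel of `(1 - P) A`.
-/

open Polynomial Module
open scoped ComplexOrder

theorem IsSelfAdjoint.isStarProjection_one_add_mul {R : Type*} [Ring R] [StarRing R] {M S : R}
    (hM : IsSelfAdjoint M) (hMS : Commute M S) (hQ : M * (1 + M * S) = 0) :
    IsStarProjection (1 + M * S) := by
  set Q := 1 + M * S
  have hQM : Q * M = 0 := by
    rw [← ((Commute.one_right M).add_right ((Commute.refl M).mul_right hMS)).eq]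
    exact hQ
  have hQM' : star Q * M = 0 := by rw [← hM.star_eq, ← star_mul, hQ, star_zero]
  have hmul : ∀ T : R, T * M = 0 → T * Q = T := fun T hT => by
    rw [mul_add, mul_one, ← mul_assoc, hT, zero_mul, add_zero]
  refine ⟨hmul Q hQM, ?_⟩
  have hstar : IsSelfAdjoint (star Q) := hmul (star Q) hQM' ▸ .star_mul_self Q
  exact IsSelfAdjoint.star_iff.mp hstar

namespace Matrix

variable {n : Type*} [Fintype n] [DecidableEq n]

theorem range_mulVecLin_one_add_mul {R : Type*} [CommRing R] {M S : Matrix n n R}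
    (hMS : Commute M S) (hQ : M * (1 + M * S) = 0) :
    LinearMap.range (1 + M * S).mulVecLin = LinearMap.ker M.mulVecLin := by
  apply le_antisymm
  · rintro _ ⟨w, rfl⟩
    rw [LinearMap.mem_ker, mulVecLin_apply, mulVecLin_apply, mulVec_mulVec, hQ, zero_mulVec]
  · intro v hv
    refine ⟨v, ?_⟩
    rw [LinearMap.mem_ker, mulVecLin_apply] at hv
    rw [mulVecLin_apply, add_mulVec, one_mulVec, hMS.eq, ← mulVec_mulVec, hv, mulVec_zero,
      add_zero]

variable {𝕜 : Type*} [RCLike 𝕜] {M : Matrix n n 𝕜}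

theorem IsHermitian.mulVec_eq_zero_of_pow_mulVec_eq_zero (hM : M.IsHermitian) {k : ℕ}
    {v : n → 𝕜} (h : (M ^ k) *ᵥ v = 0) : M *ᵥ v = 0 := by
  induction k generalizing v with
  | zero => simp_all
  | succ k ih =>
    rw [pow_succ, ← mulVec_mulVec] at h
    have h2 : (Mᴴ * M) *ᵥ v = 0 := by rw [hM.eq, ← mulVec_mulVec]; exact ih h
    exact (conjTranspose_mul_self_mulVec_eq_zero M v).mp h2

theorem IsHermitian.rootMultiplicity_zero_charpoly (hM : M.IsHermitian) :
    M.charpoly.rootMultiplicity 0 = finrank 𝕜 (LinearMap.ker M.mulVecLin) := by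
  rw [← charpoly_toLin', ← LinearMap.finrank_maxGenEigenspace_eq]
  suffices Module.End.maxGenEigenspace (toLin' M) 0 = LinearMap.ker M.mulVecLin by rw [this]
  ext v
  simp only [Module.End.mem_maxGenEigenspace, zero_smul, sub_zero, ← toLin'_pow, toLin'_apply,
    LinearMap.mem_ker, mulVecLin_apply]
  exact ⟨fun ⟨_, hk⟩ => hM.mulVec_eq_zero_of_pow_mulVec_eq_zero hk, fun h => ⟨1, by simpa⟩⟩

theorem IsHermitian.exists_charpoly_eq_X_pow_mul (hM : M.IsHermitian) :
    ∃ p : 𝕜[X], M.charpoly = X ^ finrank 𝕜 (LinearMap.ker M.mulVecLin) * p ∧ p.eval 0 ≠ 0 := by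
  obtain ⟨p, hp, hX⟩ :=
    exists_eq_pow_rootMultiplicity_mul_and_not_dvd M.charpoly (charpoly_monic M).ne_zero 0
  rw [map_zero, sub_zero] at hp hX
  rw [X_dvd_iff, coeff_zero_eq_eval_zero] at hX
  rw [hM.rootMultiplicity_zero_charpoly] at hp
  exact ⟨p, hp, hX⟩

theorem IsHermitian.mul_aeval_eq_zero_of_charpoly_eq (hM : M.IsHermitian) {k : ℕ} {p : 𝕜[X]}
    (h : M.charpoly = X ^ k * p) : M * aeval M p = 0 := by
  have hCH : M ^ k * aeval M p = 0 := by
    simpa [h] using aeval_self_charpoly M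
  refine ext_of_mulVec_single fun i => ?_
  rw [zero_mulVec, ← mulVec_mulVec]
  exact hM.mulVec_eq_zero_of_pow_mulVec_eq_zero (by rw [mulVec_mulVec, hCH, zero_mulVec])

/-- `p(M) / p(0)` when `M.charpoly = X ^ k * p`, written through the coefficients of `M.charpoly`
so that its entries depend analytically on those of `M`. -/
noncomputable def kerProj {K : Type*} [Field K] (k : ℕ) (M : Matrix n n K) : Matrix n n K :=
  (M.charpoly.coeff k)⁻¹ •
    ∑ j ∈ Finset.range (Fintype.card n + 1), M.charpoly.coeff (k + j) • M ^ j

theorem kerProj_eq_of_charpoly_eq {K : Type*} [Field K] {M : Matrix n n K} {k : ℕ} {p : K[X]}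
    (h : M.charpoly = X ^ k * p) : kerProj k M = (p.eval 0)⁻¹ • aeval M p := by
  have hcoeff : ∀ j, M.charpoly.coeff (k + j) = p.coeff j := fun j => by
    rw [h, add_comm, coeff_X_pow_mul]
  have hdeg : p.natDegree < Fintype.card n + 1 := by
    rw [Nat.lt_succ_iff, ← charpoly_natDegree_eq_dim M]
    exact natDegree_le_of_dvd (h ▸ dvd_mul_left p _) (charpoly_monic M).ne_zero
  rw [kerProj, aeval_eq_sum_range' hdeg, ← coeff_zero_eq_eval_zero, ← hcoeff 0, add_zero]
  simp_rw [hcoeff]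

theorem IsHermitian.charpoly_coeff_ne_zero (hM : M.IsHermitian) {k : ℕ}
    (hk : finrank 𝕜 (LinearMap.ker M.mulVecLin) = k) : M.charpoly.coeff k ≠ 0 := by
  obtain ⟨p, hp, hp0⟩ := hM.exists_charpoly_eq_X_pow_mul
  rwa [hp, hk, coeff_X_pow_mul', if_pos le_rfl, Nat.sub_self, coeff_zero_eq_eval_zero]

theorem IsHermitian.isStarProjection_kerProj (hM : M.IsHermitian) {k : ℕ}
    (hk : finrank 𝕜 (LinearMap.ker M.mulVecLin) = k) :
    IsStarProjection (kerProj k M) ∧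
      LinearMap.range (kerProj k M).mulVecLin = LinearMap.ker M.mulVecLin := by
  obtain ⟨p, hp, hp0⟩ := hM.exists_charpoly_eq_X_pow_mul
  rw [hk] at hp
  set S := (p.eval 0)⁻¹ • aeval M (divX p)
  have hsplit : aeval M p = M * aeval M (divX p) + p.eval 0 • 1 := by
    conv_lhs => rw [← X_mul_divX_add p]
    rw [map_add, map_mul, aeval_X, aeval_C, coeff_zero_eq_eval_zero,
      Algebra.algebraMap_eq_smul_one]
  have hQ : kerProj k M = 1 + M * S := by
    rw [kerProj_eq_of_charpoly_eq hp, hsplit, smul_add, mul_smul_comm, smul_smul,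
      inv_mul_cancel₀ hp0, one_smul, add_comm]
  have hMS : Commute M S := by
    have h := (commute_X (divX p)).map (aeval M)
    rw [aeval_X] at h
    exact h.smul_right _
  have hMQ : M * (1 + M * S) = 0 := by
    rw [← hQ, kerProj_eq_of_charpoly_eq hp, mul_smul_comm,
      hM.mul_aeval_eq_zero_of_charpoly_eq hp, smul_zero]
  rw [hQ]
  exact ⟨hM.isSelfAdjoint.isStarProjection_one_add_mul hMS hMQ,
    range_mulVecLin_one_add_mul hMS hMQ⟩

end Matrix

namespace Matrix

variable {E : Type*} [NormedAddCommGroup E] [NormedSpace ℝ E] {x : E}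

theorem analyticAt_mul_apply {l m n : Type*} [Fintype m] {A : E → Matrix l m ℂ}
    {B : E → Matrix m n ℂ}
    (hA : ∀ i j, AnalyticAt ℝ (fun t => A t i j) x)
    (hB : ∀ i j, AnalyticAt ℝ (fun t => B t i j) x) (i : l) (j : n) :
    AnalyticAt ℝ (fun t => (A t * B t) i j) x := by
  simp only [mul_apply]
  exact Finset.analyticAt_fun_sum _ fun k _ => (hA i k).mul (hB k j)

theorem analyticAt_conjTranspose_apply {m n : Type*} {A : E → Matrix m n ℂ}
    (hA : ∀ i j, AnalyticAt ℝ (fun t => A t i j) x) (i : n) (j : m) :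
    AnalyticAt ℝ (fun t => (A t)ᴴ i j) x :=
  (Complex.conjCLE.toContinuousLinearMap.analyticAt _).comp (hA j i)

theorem analyticAt_pow_apply {n : Type*} [Fintype n] [DecidableEq n] {A : E → Matrix n n ℂ}
    (hA : ∀ i j, AnalyticAt ℝ (fun t => A t i j) x) (k : ℕ) (i j : n) :
    AnalyticAt ℝ (fun t => (A t ^ k) i j) x := by
  induction k generalizing i j with
  | zero => simpa only [pow_zero] using analyticAt_const
  | succ k ih => simpa only [pow_succ] using analyticAt_mul_apply ih hA i j

theorem analyticAt_charpoly_coeff {n : Type*} [Fintype n] [DecidableEq n]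
    {A : E → Matrix n n ℂ}
    (hA : ∀ i j, AnalyticAt ℝ (fun t => A t i j) x) (k : ℕ) :
    AnalyticAt ℝ (fun t => (A t).charpoly.coeff k) x := by
  have h : ∀ t, (A t).charpoly.coeff k =
      MvPolynomial.aeval (fun ij : n × n => A t ij.1 ij.2) ((charpoly.univ ℤ n).coeff k) :=
    fun t => by rw [MvPolynomial.aeval_eq_eval₂Hom, charpoly.univ_coeff_eval₂Hom]; rfl
  simp_rw [h]
  exact AnalyticAt.aeval_mvPolynomial (f := fun t (ij : n × n) => A t ij.1 ij.2)
    (fun ij => hA ij.1 ij.2) _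

theorem analyticAt_kerProj_apply {n : Type*} [Fintype n] [DecidableEq n]
    {A : E → Matrix n n ℂ}
    (hA : ∀ i j, AnalyticAt ℝ (fun t => A t i j) x) {k : ℕ} (hk : (A x).charpoly.coeff k ≠ 0)
    (i j : n) : AnalyticAt ℝ (fun t => kerProj k (A t) i j) x := by
  simp only [kerProj, smul_apply, sum_apply, smul_eq_mul]
  exact ((analyticAt_charpoly_coeff hA k).inv hk).mul <| Finset.analyticAt_fun_sum _
    fun l _ => (analyticAt_charpoly_coeff hA _).mul (analyticAt_pow_apply hA l i j)

end Matrix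

theorem AnalyticPeriodicMat.mul {d e f : ℕ} {A : ℝ → Matrix (Fin d) (Fin e) ℂ}
    {B : ℝ → Matrix (Fin e) (Fin f) ℂ} (hA : AnalyticPeriodicMat A)
    (hB : AnalyticPeriodicMat B) :
    AnalyticPeriodicMat fun x => A x * B x :=
  ⟨fun x => by simp only [hA.1 x, hB.1 x], fun x => analyticAt_mul_apply (hA.2 x) (hB.2 x)⟩

theorem AnalyticPeriodicMat.conjTranspose {d e : ℕ} {A : ℝ → Matrix (Fin d) (Fin e) ℂ}
    (hA : AnalyticPeriodicMat A) : AnalyticPeriodicMat fun x => (A x)ᴴ :=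
  ⟨fun x => by simp only [hA.1 x], fun x => analyticAt_conjTranspose_apply (hA.2 x)⟩

theorem AnalyticPeriodicMat.one_sub {d : ℕ} {P : ℝ → Matrix (Fin d) (Fin d) ℂ}
    (hP : AnalyticPeriodicMat P) : AnalyticPeriodicMat fun x => 1 - P x :=
  ⟨fun x => by simp only [hP.1 x], fun x i j => by
    simpa only [Matrix.sub_apply] using analyticAt_const.fun_sub (hP.2 x i j)⟩

theorem ker_one_sub_mul_eq_comap_matRange {d e : ℕ} {P : Matrix (Fin d) (Fin d) ℂ}
    (hP : P * P = P) (A : Matrix (Fin d) (Fin e) ℂ) :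
    LinearMap.ker ((1 - P) * A).mulVecLin = (matRange P).comap A.mulVecLin := by
  ext v
  simp only [LinearMap.mem_ker, Submodule.mem_comap, mulVecLin_apply, matRange,
    LinearMap.mem_range, ← mulVec_mulVec, sub_mulVec, one_mulVec, sub_eq_zero]
  refine ⟨fun h => ⟨A *ᵥ v, h.symm⟩, ?_⟩
  rintro ⟨w, hw⟩
  rw [← hw, mulVec_mulVec, hP]

theorem exists_analyticPeriodicMat_orthProj_ker {d e m : ℕ}
    {B : ℝ → Matrix (Fin e) (Fin d) ℂ} (hB : AnalyticPeriodicMat B)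
    (hm : ∀ x, finrank ℂ (LinearMap.ker (B x).mulVecLin) = m) :
    ∃ Q : ℝ → Matrix (Fin d) (Fin d) ℂ, AnalyticPeriodicMat Q ∧
      ∀ x, IsOrthProj (Q x) ∧ matRange (Q x) = LinearMap.ker (B x).mulVecLin := by
  have hN := hB.conjTranspose.mul hB
  have hherm : ∀ x, ((B x)ᴴ * B x).IsHermitian := fun x => isHermitian_conjTranspose_mul_self _
  have hker : ∀ x, LinearMap.ker ((B x)ᴴ * B x).mulVecLin = LinearMap.ker (B x).mulVecLin :=
    fun x => ker_mulVecLin_conjTranspose_mul_self _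
  have hmN : ∀ x, finrank ℂ (LinearMap.ker ((B x)ᴴ * B x).mulVecLin) = m := fun x =>
    (hker x).symm ▸ hm x
  refine ⟨fun x => kerProj m ((B x)ᴴ * B x), ⟨fun x => by simp only [hN.1 x], fun x =>
    analyticAt_kerProj_apply (hN.2 x) ((hherm x).charpoly_coeff_ne_zero (hmN x))⟩, fun x => ?_⟩
  obtain ⟨hproj, hrange⟩ := (hherm x).isStarProjection_kerProj (hmN x)
  exact ⟨⟨hproj.1, hproj.2⟩, hrange.trans (hker x)⟩

theorem stmt_13_general {d : ℕ} (A P : ℝ → Matrix (Fin d) (Fin d) ℂ)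
    (hA : AnalyticPeriodicMat A)
    (hP : AnalyticPeriodicMat P)
    (hPproj : ∀ x : ℝ, IsOrthProj (P x)) :
    ((∃ m : ℕ, ∀ x : ℝ,
        Module.finrank ℂ ((matRange (P x)).comap (A x).mulVecLin) = m) →
      ∃ Q : ℝ → Matrix (Fin d) (Fin d) ℂ,
        AnalyticPeriodicMat Q ∧
        ∀ x : ℝ, IsOrthProj (Q x) ∧
          matRange (Q x) = (matRange (P x)).comap (A x).mulVecLin) ∧
    ((∃ m : ℕ, ∀ x : ℝ, Module.finrank ℂ (LinearMap.ker (A x).mulVecLin) = m) →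
      ∃ Q : ℝ → Matrix (Fin d) (Fin d) ℂ,
        AnalyticPeriodicMat Q ∧
        ∀ x : ℝ, IsOrthProj (Q x) ∧
          matRange (Q x) = LinearMap.ker (A x).mulVecLin) := by
  refine ⟨fun ⟨m, hm⟩ => ?_, fun ⟨m, hm⟩ => exists_analyticPeriodicMat_orthProj_ker hA hm⟩
  have hker (x : ℝ) := ker_one_sub_mul_eq_comap_matRange (hPproj x).1 (A x)
  simp_rw [← hker]
  exact exists_analyticPeriodicMat_orthProj_ker (hP.one_sub.mul hA) fun x => by
    rw [hker]; exact hm x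

/-- If `A(x)` is analytic 1-periodic and `P(x)` is an analytic 1-periodic
family of orthogonal projections of rank `k`, and the dimension of the preimage
`A(x)⁻¹(ran P(x))` is constant in `x`, then the family of orthogonal projections onto
`A(x)⁻¹(ran P(x))` is real analytic and 1-periodic. In particular, if `dim ker A(x)` is
constant then the family of orthogonal projections onto `ker A(x)` is real analytic and
1-periodic. -/
theorem stmt_13 {d k : ℕ} (A P : ℝ → Matrix (Fin d) (Fin d) ℂ)
    (hA : AnalyticPeriodicMat A)
    (hP : AnalyticPeriodicMat P)
    (hPproj : ∀ x : ℝ, IsOrthProj (P x))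
    (hPrank : ∀ x : ℝ, (P x).rank = k) :
    ((∃ m : ℕ, ∀ x : ℝ,
        Module.finrank ℂ ((matRange (P x)).comap (A x).mulVecLin) = m) →
      ∃ Q : ℝ → Matrix (Fin d) (Fin d) ℂ,
        AnalyticPeriodicMat Q ∧
        ∀ x : ℝ, IsOrthProj (Q x) ∧
          matRange (Q x) = (matRange (P x)).comap (A x).mulVecLin) ∧
    ((∃ m : ℕ, ∀ x : ℝ, Module.finrank ℂ (LinearMap.ker (A x).mulVecLin) = m) →
      ∃ Q : ℝ → Matrix (Fin d) (Fin d) ℂ,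
        AnalyticPeriodicMat Q ∧
        ∀ x : ℝ, IsOrthProj (Q x) ∧
          matRange (Q x) = LinearMap.ker (A x).mulVecLin) :=
  stmt_13_general A P hA hP hPproj
end

section
/- Let X be a compact, connected, real analytic manifold and μ a Borel probability measure on X whose pushforward under every analytic chart has a continuous density with respect to Lebesgue measure. Suppose g : X → ℂ is real analytic and not identically zero. Then μ{x ∈ X : g(x) = 0} = 0. -/
open MeasureTheory Filter Topology

/-! Near any point, a real analytic function on a finite-dimensional space that does not vanish
identically has a Lebesgue-null zero set: choose a nearby point `z₁` where it is nonzero and slice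
along the direction `v = z₁ - z₀`. On each line that meets the zero set near `z₀`, the
restriction is a one-variable analytic function which is nonzero one step `v` further, so its
zeros are discrete, and the disintegration of Haar measure along lines makes the zero set null.

On the manifold, the set where `g` vanishes near a point is open, and closed by the identity
theorem in charts, hence empty by connectedness. In a chart `μ` is absolutely continuous with
respect to Lebesgue measure, so the zero set is locally `μ`-null, and second countability of the
compact manifold makes it globally null. -/

open Metric

theorem AnalyticOnNhd.measure_inter_setOf_eq_zero {𝕜 F : Type*} [NontriviallyNormedField 𝕜]
    [MeasurableSpace 𝕜] [SecondCountableTopology 𝕜] [NormedAddCommGroup F] [NormedSpace 𝕜 F]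
    (μ : Measure 𝕜) [NullSingletonClass μ] {h : 𝕜 → F} {U : Set 𝕜}
    (hh : AnalyticOnNhd 𝕜 h U) (hU : IsPreconnected U) (hUm : MeasurableSet U)
    {t : 𝕜} (ht : t ∈ U) (hne : h t ≠ 0) :
    μ (U ∩ {t | h t = 0}) = 0 := by
  have hcodiscrete : ∀ᶠ t in codiscreteWithin U, h t ≠ 0 :=
    (hh.eqOn_zero_or_eventually_ne_zero_of_preconnected hU).resolve_left fun h0 => hne (h0 ht)
  have hae := ae_restrict_le_codiscreteWithin (μ := μ) hUm hcodiscrete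
  rw [mem_ae_iff, Measure.restrict_apply' hUm, Set.inter_comm] at hae
  simpa only [Set.compl_ofPred, ne_eq, not_not] using hae

theorem AnalyticOnNhd.addHaar_inter_setOf_eq_zero_of_ne_zero_translate {E F : Type*}
    [NormedAddCommGroup E] [NormedSpace ℝ E] [FiniteDimensional ℝ E] [MeasurableSpace E]
    [BorelSpace E] (μ : Measure E) [μ.IsAddHaarMeasure] [NormedAddCommGroup F]
    [NormedSpace ℝ F] {f : E → F} {V K : Set E} (hf : AnalyticOnNhd ℝ f V) (hVc : Convex ℝ V)
    (hVo : IsOpen V) (hK : IsClosed K) (hKV : K ⊆ V) {v : E}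
    (hKv : ∀ z ∈ K, z + v ∈ V ∧ f (z + v) ≠ 0) :
    μ (K ∩ {z | f z = 0}) = 0 := by
  set Z := K ∩ {z | f z = 0}
  have hZ : IsClosed Z :=
    (hf.continuousOn.mono hKV).preimage_isClosed_of_isClosed hK isClosed_singleton
  let L : ℝ →L[ℝ] E := ContinuousLinearMap.smulRight (1 : ℝ →L[ℝ] ℝ) v
  refine measure_eq_zero_iff_ae_notMem.2 <|
    ae_mem_of_ae_add_linearMap_mem L.toLinearMap volume μ hZ.measurableSet.compl fun y => ?_
  refine measure_eq_zero_iff_ae_notMem.1 (?_ : volume {t : ℝ | y + L t ∈ Z} = 0)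
  rcases Set.eq_empty_or_nonempty {t : ℝ | y + L t ∈ Z} with hempty | ⟨t₀, ht₀, -⟩
  · exact hempty ▸ measure_empty
  set U := L ⁻¹' ((y + ·) ⁻¹' V)
  have hU : IsPreconnected U := ((hVc.translate_preimage_right y).linear_preimage _).isPreconnected
  have hUo : IsOpen U := (hVo.preimage (by fun_prop)).preimage L.continuous
  have hh : AnalyticOnNhd ℝ (fun t => f (y + L t)) U := fun t ht =>
    AnalyticAt.comp (g := f) (f := fun t => y + L t) (hf _ ht)
      (analyticAt_const.add (L.analyticAt t))
  have hnext : y + L (t₀ + 1) = (y + L t₀) + v := by simp [L, add_smul, add_assoc]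
  have hnull := hh.measure_inter_setOf_eq_zero volume hU hUo.measurableSet (t := t₀ + 1)
    (show y + L (t₀ + 1) ∈ V from hnext ▸ (hKv _ ht₀).1) (hnext ▸ (hKv _ ht₀).2)
  refine measure_mono_null (fun t ht => ?_) hnull
  exact ⟨hKV ht.1, ht.2⟩

theorem AnalyticAt.exists_mem_nhds_addHaar_inter_setOf_eq_zero {E F : Type*}
    [NormedAddCommGroup E] [NormedSpace ℝ E] [FiniteDimensional ℝ E] [MeasurableSpace E]
    [BorelSpace E] (μ : Measure E) [μ.IsAddHaarMeasure] [NormedAddCommGroup F]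
    [NormedSpace ℝ F] [CompleteSpace F] {f : E → F} {z₀ : E} (hf : AnalyticAt ℝ f z₀)
    (hz : ¬ ∀ᶠ z in 𝓝 z₀, f z = 0) :
    ∃ s ∈ 𝓝 z₀, μ (s ∩ {z | f z = 0}) = 0 := by
  obtain ⟨r, hr, hfr⟩ := hf.exists_ball_analyticOnNhd
  obtain ⟨z₁, hz₁, hz₁r⟩ : ∃ z₁, f z₁ ≠ 0 ∧ z₁ ∈ ball z₀ r :=
    ((Filter.not_eventually.1 hz).and_eventually (ball_mem_nhds z₀ hr)).exists
  have hW : ball z₀ r ∩ {z | f z ≠ 0} ∈ 𝓝 z₁ :=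
    inter_mem (isOpen_ball.mem_nhds hz₁r) ((hfr z₁ hz₁r).continuousAt.eventually_ne hz₁)
  obtain ⟨ε, hε, hεW⟩ := nhds_basis_closedBall.mem_iff.1 hW
  have hδ : 0 < min ε (r / 2) := lt_min hε (half_pos hr)
  refine ⟨closedBall z₀ (min ε (r / 2)), closedBall_mem_nhds z₀ hδ, ?_⟩
  refine hfr.addHaar_inter_setOf_eq_zero_of_ne_zero_translate μ (convex_ball z₀ r) isOpen_ball
    isClosed_closedBall (closedBall_subset_ball ((min_le_right _ _).trans_lt (half_lt_self hr)))
    (v := z₁ - z₀) fun z hz => hεW ?_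
  rw [mem_closedBall, dist_eq_norm] at hz ⊢
  rw [show z + (z₁ - z₀) - z₁ = z - z₀ by abel]
  exact hz.trans (min_le_left _ _)

theorem OpenPartialHomeomorph.measure_source_inter_preimage_eq_zero {X E : Type*}
    [TopologicalSpace X] [MeasurableSpace X] [OpensMeasurableSpace X] [TopologicalSpace E]
    [MeasurableSpace E] [BorelSpace E] (e : OpenPartialHomeomorph X E)
    {μ : Measure X} {ν : Measure E} (he : (μ.restrict e.source).map e ≪ ν) {A : Set E}
    (hA : ν A = 0) : μ (e.source ∩ e ⁻¹' A) = 0 := by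
  obtain ⟨B, hAB, hB, hBν⟩ := exists_measurable_superset_of_null hA
  have hBμ := he hBν
  rw [Measure.map_apply_of_aemeasurable (e.continuousOn.aemeasurable e.open_source.measurableSet)
    hB, Measure.restrict_apply' e.open_source.measurableSet] at hBμ
  refine measure_mono_null ?_ hBμ
  exact fun x hx => ⟨hAB hx.2, hx.1⟩

section AnalyticOnMfd

variable {ℓ : ℕ} {X : Type*} [TopologicalSpace X]
  [ChartedSpace (EuclideanSpace ℝ (Fin ℓ)) X] {F : Type*} [NormedAddCommGroup F]
  [NormedSpace ℝ F] {g : X → F}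

theorem AnalyticOnMfd.isClosed_setOf_eventually_eq_zero [CompleteSpace F]
    (hg : AnalyticOnMfd (ℓ := ℓ) g) : IsClosed {x | ∀ᶠ y in 𝓝 x, g y = 0} := by
  rw [← isOpen_compl_iff, isOpen_iff_mem_nhds]
  intro x hx
  set c := chartAt (EuclideanSpace ℝ (Fin ℓ)) x
  obtain ⟨r, hr, hgr⟩ := (hg x).exists_ball_analyticOnNhd
  filter_upwards [c.open_source.mem_nhds (mem_chart_source _ x),
    c.continuousAt (mem_chart_source _ x) (ball_mem_nhds _ hr)] with y hys hyr hy
  have hzero := hgr.eqOn_zero_of_preconnected_of_eventuallyEq_zero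
    (convex_ball _ _).isPreconnected hyr ((c.eventually_nhds' (g · = 0) hys).2 hy)
  exact hx ((c.eventually_nhds' (g · = 0) (mem_chart_source _ x)).1
    (Filter.eventually_of_mem (ball_mem_nhds _ hr) hzero))

theorem AnalyticOnMfd.not_eventually_eq_zero [CompleteSpace F] [ConnectedSpace X]
    (hg : AnalyticOnMfd (ℓ := ℓ) g) (hne : ∃ x, g x ≠ 0) (x : X) :
    ¬ ∀ᶠ y in 𝓝 x, g y = 0 := by
  obtain ⟨x₀, hx₀⟩ := hne
  rcases isClopen_iff.1 ⟨hg.isClosed_setOf_eventually_eq_zero, isOpen_setOfPred_eventually_nhds⟩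
    with hS | hS
  · exact Set.eq_empty_iff_forall_notMem.1 hS x
  · exact fun _ => hx₀ (Set.eq_univ_iff_forall.1 hS x₀).self_of_nhds

end AnalyticOnMfd

theorem stmt_16_general {ℓ : ℕ} {X : Type*} [TopologicalSpace X] [CompactSpace X]
    [ConnectedSpace X] [ChartedSpace (EuclideanSpace ℝ (Fin ℓ)) X]
    [MeasurableSpace X] [BorelSpace X]
    (μ : Measure X)
    (hμ : HasContinuousChartDensity (ℓ := ℓ) μ)
    (g : X → ℂ) (hg : AnalyticOnMfd (ℓ := ℓ) g)
    (hg_ne : ∃ x : X, g x ≠ 0) :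
    μ {x : X | g x = 0} = 0 := by
  have := ChartedSpace.secondCountable_of_sigmaCompact (EuclideanSpace ℝ (Fin ℓ)) X
  refine measure_null_of_locally_null _ fun x _ => ?_
  set c := chartAt (EuclideanSpace ℝ (Fin ℓ)) x
  have hc : (μ.restrict c.source).map c ≪ volume := by
    obtain ⟨ρ, -, hρ⟩ := hμ x
    rw [hρ]
    exact (withDensity_absolutelyContinuous _ _).trans Measure.absolutelyContinuous_restrict
  have hgc : ¬ ∀ᶠ w in 𝓝 (c x), g (c.symm w) = 0 :=
    mt (c.eventually_nhds' (g · = 0) (mem_chart_source _ x)).1 (hg.not_eventually_eq_zero hg_ne x)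
  obtain ⟨s, hs, hnull⟩ := (hg x).exists_mem_nhds_addHaar_inter_setOf_eq_zero volume hgc
  refine ⟨{x | g x = 0} ∩ (c.source ∩ c ⁻¹' s), inter_mem_nhdsWithin _
    (inter_mem (chart_source_mem_nhds _ x) (c.continuousAt (mem_chart_source _ x) hs)), ?_⟩
  refine measure_mono_null ?_ (c.measure_source_inter_preimage_eq_zero hc hnull)
  rintro y ⟨hy, hys, hyc⟩
  refine ⟨hys, hyc, ?_⟩
  change g (c.symm (c y)) = 0
  rwa [c.left_inv hys]

/-- Let `X` be a compact, connected, real analytic manifold and `μ` a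
Borel probability measure whose pushforward under every analytic chart has a continuous
density with respect to Lebesgue measure. If `g : X → ℂ` is real analytic and not
identically zero, then its zero set has `μ`-measure zero. -/
theorem stmt_16 {ℓ : ℕ} {X : Type*} [TopologicalSpace X] [T2Space X] [CompactSpace X]
    [ConnectedSpace X] [ChartedSpace (EuclideanSpace ℝ (Fin ℓ)) X]
    [IsManifold (modelWithCornersSelf ℝ (EuclideanSpace ℝ (Fin ℓ))) (⊤ : WithTop ℕ∞) X]
    [MeasurableSpace X] [BorelSpace X]
    (μ : Measure X) [IsProbabilityMeasure μ]
    (hμ : HasContinuousChartDensity (ℓ := ℓ) μ)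
    (g : X → ℂ) (hg : AnalyticOnMfd (ℓ := ℓ) g)
    (hg_ne : ∃ x : X, g x ≠ 0) :
    μ {x : X | g x = 0} = 0 :=
  stmt_16_general μ hμ g hg hg_ne
end
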